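/- Gradient for a general parametrization of the depth-varying parameter: Let S > 0, f : [0,S] × ℝ^{n_z} × ℝ^{n_θ} → ℝ^{n_z} be continuously differentiable, and let the depth-varying parameter be given by a continuously differentiable parametrization θ : [0,S] × ℝ^{n_μ} → ℝ^{n_θ}, (s,μ) ↦ θ(s,μ). Fix μ ∈ ℝ^{n_μ}, suppose z : [0,S] × ℝ^{n_μ} → ℝ^{n_z} is continuously differentiable, solves ∂z/∂s(s,μ) = f(s, z(s,μ), θ(s,μ)) with z(0,μ) = z₀ independent of μ, and the Jacobian v(s) = ∂z(s,μ)/∂μ satisfies v'(s) = (∂f/∂z) v(s) + (∂f/∂θ)(∂θ/∂μ)(s,μ), v(0) = 0 (the Jacobians of f evaluated at (s, z(s,μ), θ(s,μ))). Define ℓ(μ) = L(z(S,μ)) + ∫₀ᔆ l(τ, z(τ,μ)) dτ with L, l continuously differentiable, and let a : [0,S] → ℝ^{n_z} satisfy a'(s)ᵀ = −a(s)ᵀ (∂f/∂z) − (∂l/∂z) with a(S)ᵀ = (∂L/∂z)(z(S,μ)). Then dℓ/dμ = ∫₀ᔆ a(τ)ᵀ (∂f/∂θ)(τ, z(τ,μ),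 θ(τ,μ)) (∂θ/∂μ)(τ,μ) dτ. -/

import Mathlib

/-!
Differentiating `a(s)ᵀ v(s)` with the adjoint and variational equations cancels the `∂f/∂z`
terms and leaves `a(s)ᵀ (∂f/∂θ) (∂θ/∂μ) - (∂l/∂z)(s) v(s)`. Integrating over `[0, S]` with
`v(0) = 0` and `a(S)ᵀ = ∂L/∂z` expresses `∫ aᵀ (∂f/∂θ) (∂θ/∂μ)` as `(∂L/∂z) v(S) + ∫ (∂l/∂z) v`,
which is the chain-rule derivative of the terminal term plus that of the running term, the latter
obtained by differentiating under the integral sign (the partial derivative of a `C¹` integrand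
is bounded on the compact set `[0, S] × closedBall μ 1`).
-/

open MeasureTheory Matrix

/-- The continuous linear map `w ↦ M *ᵥ w` given by a Jacobian matrix `M`. -/
noncomputable def mvCLM {m n : ℕ} (M : Matrix (Fin m) (Fin n) ℝ) :
    (Fin n → ℝ) →L[ℝ] (Fin m → ℝ) :=
  LinearMap.toContinuousLinearMap M.mulVecLin

/-- The continuous linear functional `w ↦ g ⬝ᵥ w` given by a gradient (row) vector `g`. -/
noncomputable def dotCLM {n : ℕ} (g : Fin n → ℝ) : (Fin n → ℝ) →L[ℝ] ℝ :=
  LinearMap.toContinuousLinearMap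
    { toFun := fun w => g ⬝ᵥ w
      map_add' := by intro x y; simp [dotProduct_add]
      map_smul' := by intro c x; simp [dotProduct_smul] }

attribute [local instance] Matrix.normedAddCommGroup Matrix.normedSpace

@[simp]
lemma mvCLM_apply {m n : ℕ} (M : Matrix (Fin m) (Fin n) ℝ) (w : Fin n → ℝ) :
    mvCLM M w = M *ᵥ w := rfl

@[simp]
lemma dotCLM_apply {n : ℕ} (g w : Fin n → ℝ) : dotCLM g w = g ⬝ᵥ w := rfl

lemma dotCLM_comp_mvCLM {m n : ℕ} (g : Fin m → ℝ) (M : Matrix (Fin m) (Fin n) ℝ) :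
    (dotCLM g).comp (mvCLM M) = dotCLM (g ᵥ* M) := by
  ext w
  simp [dotProduct_mulVec]

lemma dotCLM_add {n : ℕ} (x y : Fin n → ℝ) : dotCLM (x + y) = dotCLM x + dotCLM y := by
  ext w
  simp [add_dotProduct]

noncomputable def dotCLML (n : ℕ) : (Fin n → ℝ) →L[ℝ] (Fin n → ℝ) →L[ℝ] ℝ :=
  LinearMap.toContinuousLinearMap
    { toFun := dotCLM
      map_add' := dotCLM_add
      map_smul' := fun c x => by ext w; simp [smul_dotProduct] }

lemma intervalIntegral_dotCLM {n : ℕ} {g : ℝ → Fin n → ℝ} {a b : ℝ}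
    (hg : IntervalIntegrable g volume a b) :
    ∫ t in a..b, dotCLM (g t) = dotCLM (∫ t in a..b, g t) :=
  (dotCLML n).intervalIntegral_comp_comm hg

lemma ContinuousOn.of_mvCLM {X : Type*} [TopologicalSpace X] {m n : ℕ}
    {M : X → Matrix (Fin m) (Fin n) ℝ} {T : Set X}
    (hM : ContinuousOn (fun s => mvCLM (M s)) T) : ContinuousOn M T := by
  refine continuousOn_pi.2 fun i => continuousOn_pi.2 fun k => ?_
  refine ((continuous_apply i).comp_continuousOn
    (hM.clm_apply (continuousOn_const (c := Pi.single k 1)))).congr fun s _ => ?_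
  simp [mulVec_single]

lemma ContinuousOn.of_dotCLM {X : Type*} [TopologicalSpace X] {n : ℕ}
    {g : X → Fin n → ℝ} {T : Set X}
    (hg : ContinuousOn (fun s => dotCLM (g s)) T) : ContinuousOn g T :=
  continuousOn_pi.2 fun k =>
    (hg.clm_apply (continuousOn_const (c := Pi.single k 1))).congr fun s _ => by
      simp [dotProduct_single]

section MatrixContinuity

variable {X R : Type*} [TopologicalSpace X] [TopologicalSpace R] [NonUnitalNonAssocSemiring R]
  [ContinuousAdd R] [ContinuousMul R] {m n p : Type*} [Fintype m] {T : Set X}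

lemma ContinuousOn.matrix_vecMul {a : X → m → R} {M : X → Matrix m n R}
    (ha : ContinuousOn a T) (hM : ContinuousOn M T) : ContinuousOn (fun x => a x ᵥ* M x) T :=
  (continuous_fst.matrix_vecMul continuous_snd).comp_continuousOn (ha.prodMk hM)

lemma ContinuousOn.matrix_mul {M : X → Matrix p m R} {N : X → Matrix m n R}
    (hM : ContinuousOn M T) (hN : ContinuousOn N T) : ContinuousOn (fun x => M x * N x) T :=
  (continuous_fst.matrix_mul continuous_snd).comp_continuousOn (hM.prodMk hN)

end MatrixContinuity

section Partial

variable {E F G : Type*} [NormedAddCommGroup E] [NormedSpace ℝ E] [NormedAddCommGroup F]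
  [NormedSpace ℝ F] [NormedAddCommGroup G] [NormedSpace ℝ G] {Φ : E × F → G}

lemma DifferentiableAt.hasFDerivAt_partial_snd {x : E} {y : F}
    (hΦ : DifferentiableAt ℝ Φ (x, y)) :
    HasFDerivAt (fun y' => Φ (x, y'))
      ((fderiv ℝ Φ (x, y)).comp (ContinuousLinearMap.inr ℝ E F)) y :=
  hΦ.hasFDerivAt.comp y (hasFDerivAt_prodMk_right x y)

lemma ContDiff.continuousOn_partial_snd {X : Type*} [TopologicalSpace X]
    (hΦ : ContDiff ℝ 1 Φ) {p : X → E} {q : X → F} (hp : Continuous p) (hq : Continuous q)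
    {A : X → F →L[ℝ] G} {T : Set X}
    (hA : ∀ s ∈ T, HasFDerivAt (fun y => Φ (p s, y)) (A s) (q s)) : ContinuousOn A T :=
  (((hΦ.continuous_fderiv one_ne_zero).comp (hp.prodMk hq)).clm_comp
    continuous_const).continuousOn.congr fun s hs =>
      (hA s hs).unique ((hΦ.differentiable one_ne_zero _).hasFDerivAt_partial_snd)

lemma ContDiff.hasFDerivAt_intervalIntegral_partial_snd [ProperSpace F] [CompleteSpace G]
    {Φ : ℝ × F → G} (hΦ : ContDiff ℝ 1 Φ) {a b : ℝ} {y : F} {D : ℝ → F →L[ℝ] G}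
    (hD : ∀ t ∈ Set.uIcc a b, HasFDerivAt (fun y' => Φ (t, y')) (D t) y) :
    HasFDerivAt (fun y' => ∫ t in a..b, Φ (t, y')) (∫ t in a..b, D t) y := by
  set P : ℝ × F → F →L[ℝ] G := fun q => (fderiv ℝ Φ q).comp (ContinuousLinearMap.inr ℝ ℝ F)
  have hPcont : Continuous P := (hΦ.continuous_fderiv one_ne_zero).clm_comp continuous_const
  have hP : ∀ t y', HasFDerivAt (fun y'' => Φ (t, y'')) (P (t, y')) y' := fun t y' =>
    (hΦ.differentiable one_ne_zero _).hasFDerivAt_partial_snd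
  obtain ⟨C, hC⟩ :=
    (isCompact_uIcc.prod (isCompact_closedBall y 1)).exists_bound_of_continuousOn
      hPcont.continuousOn
  have hslice : ∀ y', Continuous fun t => Φ (t, y') := fun y' =>
    hΦ.continuous.comp (continuous_id.prodMk continuous_const)
  have hderiv : HasFDerivAt (fun y' => ∫ t in a..b, Φ (t, y')) (∫ t in a..b, P (t, y)) y := by
    refine intervalIntegral.hasFDerivAt_integral_of_dominated_of_fderiv_le
      (F' := fun y' t => P (t, y')) (bound := fun _ => C) (Metric.ball_mem_nhds y one_pos)
      (.of_forall fun y' => (hslice y').aestronglyMeasurable)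
      ((hslice y).intervalIntegrable a b)
      (hPcont.comp (continuous_id.prodMk continuous_const)).aestronglyMeasurable
      (.of_forall fun t ht y' hy' => hC (t, y') ⟨Set.uIoc_subset_uIcc ht,
        Metric.ball_subset_closedBall hy'⟩)
      intervalIntegrable_const (.of_forall fun t _ y' _ => hP t y')
  refine hderiv.congr_fderiv (intervalIntegral.integral_congr fun t ht => ?_)
  exact (hP t y).unique (hD t ht)

end Partial

section Adjoint

variable {m n : Type*} [Fintype m] [Fintype n]

lemma HasDerivAt.vecMul {a : ℝ → m → ℝ} {v : ℝ → Matrix m n ℝ} {a' : m → ℝ}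
    {v' : Matrix m n ℝ} {s : ℝ} (ha : HasDerivAt a a' s) (hv : HasDerivAt v v' s) :
    HasDerivAt (fun x => a x ᵥ* v x) (a' ᵥ* v s + a s ᵥ* v') s := by
  refine hasDerivAt_pi.2 fun j => ?_
  show HasDerivAt (fun x => ∑ i, a x i * v x i j)
    (∑ i, a' i * v s i j + ∑ i, a s i * v' i j) s
  rw [← Finset.sum_add_distrib]
  exact HasDerivAt.fun_sum fun i _ =>
    (hasDerivAt_pi.1 ha i).mul (hasDerivAt_pi.1 (hasDerivAt_pi.1 hv i) j)

lemma hasDerivAt_vecMul_of_adjoint {a g : ℝ → m → ℝ} {A : ℝ → Matrix m m ℝ}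
    {v B : ℝ → Matrix m n ℝ} {s : ℝ} (ha : HasDerivAt a (-(a s ᵥ* A s) - g s) s)
    (hv : HasDerivAt v (A s * v s + B s) s) :
    HasDerivAt (fun x => a x ᵥ* v x) (a s ᵥ* B s - g s ᵥ* v s) s := by
  convert ha.vecMul hv using 1
  rw [sub_vecMul, neg_vecMul, vecMul_add, vecMul_vecMul]
  abel

lemma integral_vecMul_eq_of_adjoint {a g : ℝ → m → ℝ} {A : ℝ → Matrix m m ℝ}
    {v B : ℝ → Matrix m n ℝ} {t₀ t₁ : ℝ} (ht : t₀ ≤ t₁)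
    (ha : ∀ s ∈ Set.Icc t₀ t₁, HasDerivAt a (-(a s ᵥ* A s) - g s) s)
    (hv : ∀ s ∈ Set.Icc t₀ t₁, HasDerivAt v (A s * v s + B s) s)
    (haB : IntervalIntegrable (fun s => a s ᵥ* B s) volume t₀ t₁)
    (hgv : IntervalIntegrable (fun s => g s ᵥ* v s) volume t₀ t₁) :
    ∫ s in t₀..t₁, a s ᵥ* B s = a t₁ ᵥ* v t₁ - a t₀ ᵥ* v t₀ + ∫ s in t₀..t₁, g s ᵥ* v s := by
  have hFTC := intervalIntegral.integral_eq_sub_of_hasDerivAt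
    (fun s hs => hasDerivAt_vecMul_of_adjoint (ha s ?_) (hv s ?_)) (haB.sub hgv)
  · rw [intervalIntegral.integral_sub haB hgv] at hFTC
    rw [← hFTC, sub_add_cancel]
  all_goals rwa [Set.uIcc_of_le ht] at hs

end Adjoint

theorem general_parametrization_gradient_general
    {nz nθ nμ : ℕ} {S : ℝ} (hS : 0 < S)
    (f : ℝ → (Fin nz → ℝ) → (Fin nθ → ℝ) → (Fin nz → ℝ))
    (hf : ContDiff ℝ 1 (fun q : ℝ × (Fin nz → ℝ) × (Fin nθ → ℝ) => f q.1 q.2.1 q.2.2))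
    -- parametrization of the depth-varying parameter and its Jacobian in `μ`
    (θ : ℝ → (Fin nμ → ℝ) → (Fin nθ → ℝ))
    (hθ : ContDiff ℝ 1 (fun q : ℝ × (Fin nμ → ℝ) => θ q.1 q.2))
    (μ : Fin nμ → ℝ)
    (Θμ : ℝ → Matrix (Fin nθ) (Fin nμ) ℝ)
    (hΘμ : ∀ s ∈ Set.Icc (0:ℝ) S, HasFDerivAt (fun μ' => θ s μ') (mvCLM (Θμ s)) μ)
    (z : ℝ → (Fin nμ → ℝ) → (Fin nz → ℝ))
    (hz : ContDiff ℝ 1 (fun q : ℝ × (Fin nμ → ℝ) => z q.1 q.2))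
    -- Jacobians of `f` along the solution
    (Fz : ℝ → Matrix (Fin nz) (Fin nz) ℝ) (Fθ : ℝ → Matrix (Fin nz) (Fin nθ) ℝ)
    (hFθ : ∀ s ∈ Set.Icc (0:ℝ) S,
      HasFDerivAt (fun q : Fin nθ → ℝ => f s (z s μ) q) (mvCLM (Fθ s)) (θ s μ))
    -- `v(s) = ∂z(s,μ)/∂μ` satisfies the variational equation with `v 0 = 0`
    (v : ℝ → Matrix (Fin nz) (Fin nμ) ℝ)
    (hv : ∀ s ∈ Set.Icc (0:ℝ) S, HasFDerivAt (fun μ' => z s μ') (mvCLM (v s)) μ)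
    (hvar : ∀ s ∈ Set.Icc (0:ℝ) S, HasDerivAt v (Fz s * v s + Fθ s * Θμ s) s)
    (hv0 : v 0 = 0)
    -- loss functions and their gradients
    (L : (Fin nz → ℝ) → ℝ) (l : ℝ → (Fin nz → ℝ) → ℝ)
    (hl : ContDiff ℝ 1 (fun q : ℝ × (Fin nz → ℝ) => l q.1 q.2))
    (Lz : Fin nz → ℝ) (lz : ℝ → (Fin nz → ℝ))
    (hLz : HasFDerivAt L (dotCLM Lz) (z S μ))
    (hlz : ∀ s ∈ Set.Icc (0:ℝ) S, HasFDerivAt (fun w => l s w) (dotCLM (lz s)) (z s μ))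
    -- the adjoint state
    (a : ℝ → (Fin nz → ℝ))
    (ha : ∀ s ∈ Set.Icc (0:ℝ) S, HasDerivAt a (-(a s ᵥ* Fz s) - lz s) s)
    (haS : a S = Lz) :
    HasFDerivAt (fun μ' : Fin nμ → ℝ => L (z S μ') + ∫ τ in (0:ℝ)..S, l τ (z τ μ'))
      (dotCLM (∫ τ in (0:ℝ)..S, (a τ ᵥ* Fθ τ) ᵥ* Θμ τ)) μ := by
  have hzμ : Continuous fun s => z s μ :=
    hz.continuous.comp (continuous_id.prodMk continuous_const)
  have hθμ : Continuous fun s => θ s μ :=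
    hθ.continuous.comp (continuous_id.prodMk continuous_const)
  have hf' : ContDiff ℝ 1 fun q : (ℝ × (Fin nz → ℝ)) × (Fin nθ → ℝ) => f q.1.1 q.1.2 q.2 :=
    hf.comp (contDiff_fst.fst.prodMk (contDiff_fst.snd.prodMk contDiff_snd))
  have hFθc : ContinuousOn Fθ (Set.Icc 0 S) := .of_mvCLM <|
    hf'.continuousOn_partial_snd (continuous_id.prodMk hzμ) hθμ hFθ
  have hΘc : ContinuousOn Θμ (Set.Icc 0 S) := .of_mvCLM <|
    hθ.continuousOn_partial_snd continuous_id continuous_const hΘμ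
  have hlzc : ContinuousOn lz (Set.Icc 0 S) := .of_dotCLM <|
    hl.continuousOn_partial_snd continuous_id hzμ hlz
  have hac : ContinuousOn a (Set.Icc 0 S) :=
    fun s hs => (ha s hs).continuousAt.continuousWithinAt
  have hvc : ContinuousOn v (Set.Icc 0 S) :=
    fun s hs => (hvar s hs).continuousAt.continuousWithinAt
  have hint₁ : IntervalIntegrable (fun τ => a τ ᵥ* (Fθ τ * Θμ τ)) volume 0 S :=
    (hac.matrix_vecMul (hFθc.matrix_mul hΘc)).intervalIntegrable_of_Icc hS.le
  have hint₂ : IntervalIntegrable (fun τ => lz τ ᵥ* v τ) volume 0 S :=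
    (hlzc.matrix_vecMul hvc).intervalIntegrable_of_Icc hS.le
  have hadj := integral_vecMul_eq_of_adjoint hS.le ha hvar hint₁ hint₂
  rw [hv0, vecMul_zero, sub_zero, haS] at hadj
  have hterm := hLz.comp μ (hv S ⟨hS.le, le_rfl⟩)
  rw [dotCLM_comp_mvCLM] at hterm
  have hintegral : HasFDerivAt (fun μ' => ∫ τ in (0:ℝ)..S, l τ (z τ μ'))
      (dotCLM (∫ τ in (0:ℝ)..S, lz τ ᵥ* v τ)) μ := by
    rw [← intervalIntegral_dotCLM hint₂]
    refine (hl.comp (contDiff_fst.prodMk hz)).hasFDerivAt_intervalIntegral_partial_snd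
      fun t ht => ?_
    rw [Set.uIcc_of_le hS.le] at ht
    rw [← dotCLM_comp_mvCLM]
    exact (hlz t ht).comp μ (hv t ht)
  simp only [vecMul_vecMul]
  rw [hadj, dotCLM_add]
  exact hterm.add hintegral

/-- **Gradient for a general parametrization of the depth-varying parameter.**
With the depth-varying parameter given by a continuously differentiable parametrization
`θ(s, μ)` with finite-dimensional parameters `μ`, the gradient of the loss
`ℓ(μ) = L(z(S,μ)) + ∫₀ˢ l(τ, z(τ,μ)) dτ` is
`dℓ/dμ = ∫₀ˢ a(τ)ᵀ (∂f/∂θ)(τ, z(τ,μ), θ(τ,μ)) (∂θ/∂μ)(τ,μ) dτ`, where `a` is the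
adjoint state. -/
theorem general_parametrization_gradient
    {nz nθ nμ : ℕ} {S : ℝ} (hS : 0 < S)
    (f : ℝ → (Fin nz → ℝ) → (Fin nθ → ℝ) → (Fin nz → ℝ))
    (hf : ContDiff ℝ 1 (fun q : ℝ × (Fin nz → ℝ) × (Fin nθ → ℝ) => f q.1 q.2.1 q.2.2))
    -- parametrization of the depth-varying parameter and its Jacobian in `μ`
    (θ : ℝ → (Fin nμ → ℝ) → (Fin nθ → ℝ))
    (hθ : ContDiff ℝ 1 (fun q : ℝ × (Fin nμ → ℝ) => θ q.1 q.2))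
    (μ : Fin nμ → ℝ)
    (Θμ : ℝ → Matrix (Fin nθ) (Fin nμ) ℝ)
    (hΘμ : ∀ s ∈ Set.Icc (0:ℝ) S, HasFDerivAt (fun μ' => θ s μ') (mvCLM (Θμ s)) μ)
    (z : ℝ → (Fin nμ → ℝ) → (Fin nz → ℝ)) (z₀ : Fin nz → ℝ)
    (hz : ContDiff ℝ 1 (fun q : ℝ × (Fin nμ → ℝ) => z q.1 q.2))
    (hode : ∀ s ∈ Set.Icc (0:ℝ) S, HasDerivAt (fun u => z u μ) (f s (z s μ) (θ s μ)) s)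
    (hinit : ∀ μ' : Fin nμ → ℝ, z 0 μ' = z₀)
    -- Jacobians of `f` along the solution
    (Fz : ℝ → Matrix (Fin nz) (Fin nz) ℝ) (Fθ : ℝ → Matrix (Fin nz) (Fin nθ) ℝ)
    (hFz : ∀ s ∈ Set.Icc (0:ℝ) S,
      HasFDerivAt (fun w => f s w (θ s μ)) (mvCLM (Fz s)) (z s μ))
    (hFθ : ∀ s ∈ Set.Icc (0:ℝ) S,
      HasFDerivAt (fun q : Fin nθ → ℝ => f s (z s μ) q) (mvCLM (Fθ s)) (θ s μ))
    -- `v(s) = ∂z(s,μ)/∂μ` satisfies the variational equation with `v 0 = 0`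
    (v : ℝ → Matrix (Fin nz) (Fin nμ) ℝ)
    (hv : ∀ s ∈ Set.Icc (0:ℝ) S, HasFDerivAt (fun μ' => z s μ') (mvCLM (v s)) μ)
    (hvar : ∀ s ∈ Set.Icc (0:ℝ) S, HasDerivAt v (Fz s * v s + Fθ s * Θμ s) s)
    (hv0 : v 0 = 0)
    -- loss functions and their gradients
    (L : (Fin nz → ℝ) → ℝ) (l : ℝ → (Fin nz → ℝ) → ℝ)
    (hL : ContDiff ℝ 1 L)
    (hl : ContDiff ℝ 1 (fun q : ℝ × (Fin nz → ℝ) => l q.1 q.2))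
    (Lz : Fin nz → ℝ) (lz : ℝ → (Fin nz → ℝ))
    (hLz : HasFDerivAt L (dotCLM Lz) (z S μ))
    (hlz : ∀ s ∈ Set.Icc (0:ℝ) S, HasFDerivAt (fun w => l s w) (dotCLM (lz s)) (z s μ))
    -- the adjoint state
    (a : ℝ → (Fin nz → ℝ))
    (ha : ∀ s ∈ Set.Icc (0:ℝ) S, HasDerivAt a (-(a s ᵥ* Fz s) - lz s) s)
    (haS : a S = Lz) :
    HasFDerivAt (fun μ' : Fin nμ → ℝ => L (z S μ') + ∫ τ in (0:ℝ)..S, l τ (z τ μ'))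
      (dotCLM (∫ τ in (0:ℝ)..S, (a τ ᵥ* Fθ τ) ᵥ* Θμ τ)) μ :=
  general_parametrization_gradient_general hS f hf θ hθ μ Θμ hΘμ z hz Fz Fθ hFθ v hv hvar hv0 L l hl
    Lz lz hLz hlz a ha haS
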